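/- arXiv:2008.04784 — 5 statements merged into one kernel-verified Lean document; each statement's English description precedes it below -/
import Mathlib

section
/- Let G be a finite group and H a subgroup with H < G such that the interval I[H,G] in the subgroup lattice of G is isomorphic to M_n (i.e., the set S of subgroups K with H < K < G has exactly n elements, and any two distinct members K, K' of S satisfy K ⊓ K' = H and K ⊔ K' = G). If the index [G : H] is strictly less than 2n, then H is a normal subgroup of G. -/
/-!
The sets `K \ H`, for `K` strictly between `H` and `G`, are pairwise disjoint subsets of `G \ H`
of size `([K : H] - 1) |H|`, so `∑ ([K : H] - 1) ≤ [G : H] - 1 < 2n - 1`. As every `[K : H] ≥ 2`,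
at least two of the `n` intermediate subgroups have index `2` over `H`. Both normalize `H`, and
their join is `G`.
-/

open Finset

namespace Subgroup

variable {G : Type*} [Group G]

theorem le_normalizer_of_relIndex_eq_two {H K : Subgroup G} (hHK : H ≤ K)
    (h : H.relIndex K = 2) : K ≤ normalizer (H : Set G) :=
  (normal_subgroupOf_iff_le_normalizer hHK).mp (normal_of_index_eq_two h)

theorem normal_of_sup_eq_top_of_relIndex_eq_two {H K K' : Subgroup G} (hHK : H ≤ K)
    (hHK' : H ≤ K') (hK : H.relIndex K = 2) (hK' : H.relIndex K' = 2) (hsup : K ⊔ K' = ⊤) :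
    H.Normal := by
  rw [← normalizer_eq_top_iff, eq_top_iff, ← hsup]
  exact sup_le (le_normalizer_of_relIndex_eq_two hHK hK) (le_normalizer_of_relIndex_eq_two hHK' hK')

theorem card_mul_relIndex {H K : Subgroup G} (h : H ≤ K) :
    Nat.card H * H.relIndex K = Nat.card K := by
  rw [← relIndex_bot_left, ← relIndex_bot_left, relIndex_mul_relIndex ⊥ H K bot_le h]

variable [Finite G]

theorem one_lt_relIndex_of_lt {H K : Subgroup G} (h : H < K) : 1 < H.relIndex K :=
  one_lt_index_of_ne_top (mt subgroupOf_eq_top.mp h.not_ge)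

theorem sum_card_sub_card_le {H : Subgroup G} (F : Finset (Subgroup G)) (hle : ∀ K ∈ F, H ≤ K)
    (hinf : (F : Set (Subgroup G)).Pairwise fun K K' => K ⊓ K' ≤ H) :
    ∑ K ∈ F, (Nat.card K - Nat.card H) ≤ Nat.card G - Nat.card H := by
  classical
  have := Fintype.ofFinite G
  let outside (K : Subgroup G) : Finset G := (K : Set G).toFinset \ (H : Set G).toFinset
  have hcard : ∀ K : Subgroup G, H ≤ K → (outside K).card = Nat.card K - Nat.card H := by
    intro K hK
    rw [card_sdiff_of_subset (Set.toFinset_subset_toFinset.mpr hK), ← Nat.card_eq_card_toFinset,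
      ← Nat.card_eq_card_toFinset]
    rfl
  have hdisj : (F : Set (Subgroup G)).PairwiseDisjoint outside := by
    intro K hK K' hK' hne
    rw [Function.onFun, disjoint_left]
    intro g hg hg'
    simp only [outside, mem_sdiff, Set.mem_toFinset, SetLike.mem_coe] at hg hg'
    exact hg.2 (hinf hK hK' hne ⟨hg.1, hg'.1⟩)
  calc ∑ K ∈ F, (Nat.card K - Nat.card H)
      = ∑ K ∈ F, (outside K).card := sum_congr rfl fun K hK => (hcard K (hle K hK)).symm
    _ = (F.biUnion outside).card := (card_biUnion hdisj).symm
    _ ≤ (outside ⊤).card := card_le_card <| biUnion_subset.mpr fun K _ =>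
          sdiff_subset_sdiff (Set.toFinset_subset_toFinset.mpr le_top) subset_rfl
    _ = Nat.card G - Nat.card H := by rw [hcard ⊤ le_top, card_top]

theorem sum_relIndex_sub_one_le {H : Subgroup G} (F : Finset (Subgroup G)) (hle : ∀ K ∈ F, H ≤ K)
    (hinf : (F : Set (Subgroup G)).Pairwise fun K K' => K ⊓ K' ≤ H) :
    ∑ K ∈ F, (H.relIndex K - 1) ≤ H.index - 1 := by
  refine Nat.le_of_mul_le_mul_left ?_ (Nat.card_pos (α := H))
  rw [mul_sum]
  calc ∑ K ∈ F, Nat.card H * (H.relIndex K - 1)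
      = ∑ K ∈ F, (Nat.card K - Nat.card H) := sum_congr rfl fun K hK => by
        rw [Nat.mul_sub_one, card_mul_relIndex (hle K hK)]
    _ ≤ Nat.card G - Nat.card H := sum_card_sub_card_le F hle hinf
    _ = Nat.card H * (H.index - 1) := by rw [Nat.mul_sub_one, card_mul_index]

end Subgroup

theorem Finset.two_mul_card_le_sum_sub_one_add_card_filter {ι : Type*} (F : Finset ι) (r : ι → ℕ)
    (hr : ∀ i ∈ F, 2 ≤ r i) : 2 * #F ≤ ∑ i ∈ F, (r i - 1) + #(F.filter fun i => r i = 2) := by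
  rw [card_filter, ← sum_add_distrib, mul_comm, ← smul_eq_mul, ← sum_const]
  exact sum_le_sum fun i hi => by have := hr i hi; split_ifs <;> omega

theorem stmt_0_general {G : Type*} [Group G] [Fintype G] (H : Subgroup G) (n : ℕ)
    (hcard : {K : Subgroup G | H < K ∧ K < ⊤}.ncard = n)
    (hMn : ∀ K K' : Subgroup G, K ∈ {K : Subgroup G | H < K ∧ K < ⊤} →
      K' ∈ {K : Subgroup G | H < K ∧ K < ⊤} → K ≠ K' → K ⊓ K' = H ∧ K ⊔ K' = ⊤)
    (hindex : H.index < 2 * n) :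
    H.Normal := by
  set S := {K : Subgroup G | H < K ∧ K < ⊤}
  set F := S.toFinite.toFinset
  have hF : #F = n := by rw [← hcard, Set.ncard_eq_toFinset_card]
  have hmem : ∀ {K}, K ∈ F ↔ K ∈ S := S.toFinite.mem_toFinset
  have hsum := Subgroup.sum_relIndex_sub_one_le (H := H) F (fun K hK => (hmem.mp hK).1.le)
    fun K hK K' hK' hne => (hMn K K' (hmem.mp hK) (hmem.mp hK') hne).1.le
  have hlower := F.two_mul_card_le_sum_sub_one_add_card_filter (H.relIndex ·)
    fun K hK => Subgroup.one_lt_relIndex_of_lt (hmem.mp hK).1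
  obtain ⟨K, hK, K', hK', hne⟩ := one_lt_card.mp (show 1 < #(F.filter (H.relIndex · = 2)) by omega)
  rw [mem_filter, hmem] at hK hK'
  exact Subgroup.normal_of_sup_eq_top_of_relIndex_eq_two hK.1.1.le hK'.1.1.le hK.2 hK'.2
    (hMn K K' hK.1 hK'.1 hne).2

/-- If `G` is a finite group, `H < G` a subgroup such that the interval `I[H,G]`
in the subgroup lattice is isomorphic to `M_n` (there are exactly `n` intermediate
subgroups, any two distinct ones meeting in `H` and joining to `G`), and
`[G : H] < 2n`, then `H` is normal in `G`. -/
theorem stmt_0 {G : Type*} [Group G] [Fintype G] (H : Subgroup G) (n : ℕ)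
    (hHG : H < ⊤)
    (hcard : {K : Subgroup G | H < K ∧ K < ⊤}.ncard = n)
    (hMn : ∀ K K' : Subgroup G, K ∈ {K : Subgroup G | H < K ∧ K < ⊤} →
      K' ∈ {K : Subgroup G | H < K ∧ K < ⊤} → K ≠ K' → K ⊓ K' = H ∧ K ⊔ K' = ⊤)
    (hindex : H.index < 2 * n) :
    H.Normal :=
  stmt_0_general H n hcard hMn hindex
end

section
/- Let G be a finite group and H a subgroup with H < G such that H is normal in G and the interval I[H,G] in the subgroup lattice of G is isomorphic to M_n (i.e., the set S of subgroups K with H < K < G has exactly n elements, and any two distinct members K, K' of S satisfy K ⊓ K' = H and K ⊔ K' = G). If the index [G : H] is strictly less than 2n, then the quotient group G/H is isomorphic to a dihedral group D_{2m} of order 2m for some m ≥ 1. -/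
/-!
Pass to `Q = G ⧸ H`. By the correspondence theorem the `n` proper nontrivial subgroups of `Q`
intersect pairwise trivially and generate `Q` pairwise. Their sets of nonidentity elements are
disjoint, so `∑ (|K| - 1) ≤ |Q| - 1 < 2n - 1`, whereas the sum would be at least `2n - 1` if at
most one of them had order `2`. So two of them are `⟨s⟩ ≠ ⟨t⟩` for involutions `s, t`, which
then generate `Q`.

A group generated by two distinct involutions `s, t` is dihedral of order `2 · ord(st)`: the map
`rⁱ ↦ (st)ⁱ`, `srⁱ ↦ s (st)ⁱ` is a surjective homomorphism, and it is injective because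
`s ∉ ⟨st⟩` (otherwise `s` and `t` commute, `⟨st⟩ = {1, st}`, and `s = st` forces `t = 1`).
-/

open Subgroup

section Involutions

variable {Q : Type*} [Group Q]

lemma zpow_cast_eq_zpow_of_intCast_eq {n : ℕ} {x : Q} (hx : x ^ n = 1) {i : ZMod n} {a : ℤ}
    (ha : (a : ZMod n) = i) : x ^ (i.cast : ℤ) = x ^ a := by
  rw [zpow_eq_zpow_iff_modEq]
  refine Int.ModEq.of_dvd (Int.natCast_dvd_natCast.mpr (orderOf_dvd_of_pow_eq_one hx)) ?_
  rw [← ZMod.intCast_eq_intCast_iff, ZMod.intCast_zmod_cast, ha]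

lemma zpow_mul_eq_mul_zpow_neg {s x : Q} (hs : s * s = 1) (hsx : s * x * s = x⁻¹) (k : ℤ) :
    x ^ k * s = s * x ^ (-k) := by
  have hconj : (s * x * s⁻¹) ^ k = s * x ^ k * s⁻¹ := conj_zpow
  rw [inv_eq_of_mul_eq_one_left hs, hsx] at hconj
  rw [zpow_neg, ← inv_zpow, hconj, ← mul_assoc, ← mul_assoc, hs, one_mul]

lemma notMem_zpowers_mul {s t : Q} (hs : s * s = 1) (ht : t * t = 1) (hs1 : s ≠ 1) (ht1 : t ≠ 1)
    (hst : s ≠ t) : s ∉ zpowers (s * t) := by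
  rintro ⟨k, hk : (s * t) ^ k = s⟩
  have hcomm : s * (s * t) = s * t * s := by
    simpa only [hk] using ((Commute.refl (s * t)).zpow_left k).eq
  have hsq : (s * t) ^ 2 = 1 :=
    calc (s * t) ^ 2 = s * t * s * t := by rw [pow_two, ← mul_assoc]
    _ = s * (s * t) * t := by rw [← hcomm]
    _ = 1 := by rw [← mul_assoc, hs, one_mul, ht]
  have hne : s * t ≠ 1 := fun h =>
    hst (eq_inv_of_mul_eq_one_left h ▸ inv_eq_of_mul_eq_one_left ht)
  rw [← zpow_mod_orderOf, orderOf_eq_prime hsq hne] at hk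
  rcases Int.emod_two_eq k with hk2 | hk2 <;> simp [hk2, hs1.symm, ht1] at hk

end Involutions

namespace DihedralGroup

variable {Q : Type*} [Group Q] {n : ℕ}

-- For `n = 0` the cast `ZMod 0 → ℤ` is the identity, so this also covers the infinite dihedral
-- group.
def lift (s x : Q) (hs : s * s = 1) (hx : x ^ n = 1) (hsx : s * x * s = x⁻¹) :
    DihedralGroup n →* Q where
  toFun
    | r i => x ^ (i.cast : ℤ)
    | sr i => s * x ^ (i.cast : ℤ)
  map_one' := by
    change x ^ ((0 : ZMod n).cast : ℤ) = 1
    rw [ZMod.cast_zero, zpow_zero]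
  map_mul' := by
    have hcast : ∀ i j : ZMod n, x ^ ((i + j).cast : ℤ) = x ^ (i.cast : ℤ) * x ^ (j.cast : ℤ) :=
      fun i j => by
        rw [zpow_cast_eq_zpow_of_intCast_eq hx (a := i.cast + j.cast) (by simp), zpow_add]
    have hsub : ∀ i j : ZMod n, x ^ ((j - i).cast : ℤ) = x ^ (-(i.cast : ℤ)) * x ^ (j.cast : ℤ) :=
      fun i j => by
        rw [zpow_cast_eq_zpow_of_intCast_eq hx (a := -i.cast + j.cast)
          (by push_cast [ZMod.intCast_zmod_cast]; ring), zpow_add]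
    have hxs := zpow_mul_eq_mul_zpow_neg hs hsx
    rintro (i | i) (j | j)
    · exact hcast i j
    · change s * x ^ ((j - i).cast : ℤ) = x ^ (i.cast : ℤ) * (s * x ^ (j.cast : ℤ))
      rw [hsub, ← mul_assoc, ← hxs, mul_assoc]
    · change s * x ^ ((i + j).cast : ℤ) = s * x ^ (i.cast : ℤ) * x ^ (j.cast : ℤ)
      rw [hcast, mul_assoc]
    · change x ^ ((j - i).cast : ℤ) = s * x ^ (i.cast : ℤ) * (s * x ^ (j.cast : ℤ))
      rw [hsub, mul_assoc s, ← mul_assoc _ s, hxs, ← mul_assoc, ← mul_assoc, hs, one_mul]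

variable {s x : Q} {hs : s * s = 1} {hx : x ^ n = 1} {hsx : s * x * s = x⁻¹}

@[simp]
lemma lift_r (i : ZMod n) : lift s x hs hx hsx (r i) = x ^ (i.cast : ℤ) := rfl

@[simp]
lemma lift_sr (i : ZMod n) : lift s x hs hx hsx (sr i) = s * x ^ (i.cast : ℤ) := rfl

lemma lift_injective (hn : orderOf x = n) (hsx' : s ∉ zpowers x) :
    Function.Injective (lift s x hs hx hsx) := by
  rw [injective_iff_map_eq_one]
  rintro (i | i) h
  · rw [lift_r, ← zpow_zero x, zpow_eq_zpow_iff_modEq, hn, ← ZMod.intCast_eq_intCast_iff,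
      ZMod.intCast_zmod_cast, Int.cast_zero] at h
    rw [h, r_zero]
  · rw [lift_sr] at h
    exact absurd (eq_inv_of_mul_eq_one_left h ▸ inv_mem (zpow_mem_zpowers x _)) hsx'

theorem nonempty_mulEquiv_of_involutions {s t : Q} (hs : s * s = 1) (ht : t * t = 1)
    (hs1 : s ≠ 1) (ht1 : t ≠ 1) (hst : s ≠ t) (hgen : zpowers s ⊔ zpowers t = ⊤) :
    Nonempty (DihedralGroup (orderOf (s * t)) ≃* Q) := by
  have hsx : s * (s * t) * s = (s * t)⁻¹ := by
    rw [mul_inv_rev, inv_eq_of_mul_eq_one_left hs, inv_eq_of_mul_eq_one_left ht, ← mul_assoc, hs,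
      one_mul]
  let φ := lift s (s * t) hs (pow_orderOf_eq_one _) hsx
  have hsurj : Function.Surjective φ := by
    rw [← MonoidHom.range_eq_top, ← top_le_iff, ← hgen, sup_le_iff, zpowers_le, zpowers_le]
    refine ⟨⟨sr 0, by simp [φ]⟩, ⟨sr 1, ?_⟩⟩
    rw [lift_sr, zpow_cast_eq_zpow_of_intCast_eq (pow_orderOf_eq_one _) (a := 1) Int.cast_one,
      zpow_one, ← mul_assoc, hs, one_mul]
  exact ⟨MulEquiv.ofBijective φ ⟨lift_injective rfl (notMem_zpowers_mul hs ht hs1 ht1 hst), hsurj⟩⟩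

end DihedralGroup

section PairwiseTrivialIntersection

variable {Q : Type*} [Group Q] [Finite Q]

lemma sum_card_sub_one_le_of_pairwise_inf_eq_bot {S : Finset (Subgroup Q)}
    (hS : (S : Set (Subgroup Q)).Pairwise fun K K' => K ⊓ K' = ⊥) :
    ∑ K ∈ S, (Nat.card K - 1) ≤ Nat.card Q - 1 := by
  classical
  have := Fintype.ofFinite Q
  let F : Subgroup Q → Finset Q := fun K => (K : Set Q).toFinset.erase 1
  have hF : ∀ K : Subgroup Q, (F K).card = Nat.card K - 1 := fun K => by
    rw [Finset.card_erase_of_mem (by simp [one_mem]), ← Nat.card_eq_card_toFinset]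
    rfl
  have hdisj : (S : Set (Subgroup Q)).PairwiseDisjoint F := fun K hK K' hK' hne => by
    refine Finset.disjoint_left.mpr fun g hg hg' => ?_
    simp only [F, Finset.mem_erase, Set.mem_toFinset, SetLike.mem_coe] at hg hg'
    have hg1 : g ∈ K ⊓ K' := ⟨hg.2, hg'.2⟩
    rw [hS hK hK' hne, mem_bot] at hg1
    exact hg.1 hg1
  calc ∑ K ∈ S, (Nat.card K - 1) = (S.biUnion F).card := by
        rw [Finset.card_biUnion hdisj]; simp only [hF]
    _ ≤ (Finset.univ.erase (1 : Q)).card :=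
        Finset.card_le_card fun g hg => by
          obtain ⟨K, -, hgK⟩ := Finset.mem_biUnion.mp hg
          exact Finset.mem_erase.mpr ⟨(Finset.mem_erase.mp hgK).1, Finset.mem_univ g⟩
    _ = Nat.card Q - 1 := by
        rw [Finset.card_erase_of_mem (Finset.mem_univ 1), Finset.card_univ,
          Nat.card_eq_fintype_card]

lemma exists_ne_card_eq_two_of_pairwise_inf_eq_bot {S : Set (Subgroup Q)} (hbot : ⊥ ∉ S)
    (hS : S.Pairwise fun K K' => K ⊓ K' = ⊥) (hlt : Nat.card Q < 2 * S.ncard) :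
    ∃ K ∈ S, ∃ K' ∈ S, K ≠ K' ∧ Nat.card K = 2 ∧ Nat.card K' = 2 := by
  classical
  obtain ⟨T, rfl⟩ := S.toFinite.exists_finset_coe
  rw [Set.ncard_coe_finset] at hlt
  by_contra! hcon
  have htwo : (T.filter fun K : Subgroup Q => Nat.card K = 2).card ≤ 1 :=
    Finset.card_le_one.mpr fun K hK K' hK' => by
      rw [Finset.mem_filter] at hK hK'
      by_contra hne
      exact hcon K hK.1 K' hK'.1 hne hK.2 hK'.2
  have hbound : ∀ K ∈ T, 2 ≤ (Nat.card K - 1) + if Nat.card K = 2 then 1 else 0 := by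
    intro K hK
    have := (one_lt_card_iff_ne_bot K).mpr (ne_of_mem_of_not_mem hK hbot)
    split_ifs <;> omega
  have hsum := Finset.sum_le_sum hbound
  rw [Finset.sum_add_distrib, ← Finset.card_filter, Finset.sum_const, smul_eq_mul] at hsum
  have := sum_card_sub_one_le_of_pairwise_inf_eq_bot hS
  have := Nat.card_pos (α := Q)
  omega

end PairwiseTrivialIntersection

lemma Subgroup.exists_eq_zpowers_of_card_eq_two {Q : Type*} [Group Q] {K : Subgroup Q}
    (hK : Nat.card K = 2) : ∃ s : Q, s ≠ 1 ∧ s * s = 1 ∧ zpowers s = K := by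
  have : Finite K := Nat.finite_of_card_ne_zero (by omega)
  obtain ⟨s, hsK, hs1⟩ := K.bot_or_exists_ne_one.resolve_left fun h => by
    simp [h] at hK
  have hord : orderOf s = 2 :=
    (Nat.dvd_prime Nat.prime_two).mp (hK ▸ K.orderOf_dvd_natCard hsK) |>.resolve_left
      (orderOf_eq_one_iff.not.mpr hs1)
  refine ⟨s, hs1, by rw [← pow_two, ← hord, pow_orderOf_eq_one], ?_⟩
  exact eq_of_le_of_card_ge (zpowers_le.mpr hsK) (by rw [hK, Nat.card_zpowers, hord])

section Correspondence

variable {G Q : Type*} [Group G] [Group Q] {f : G →* Q}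

lemma Subgroup.comap_image_Ioo_bot_top (hf : Function.Surjective f) :
    comap f '' Set.Ioo ⊥ ⊤ = Set.Ioo f.ker ⊤ := by
  ext L
  constructor
  · rintro ⟨K, ⟨hbot, htop⟩, rfl⟩
    rw [← MonoidHom.comap_bot, ← comap_top f]
    exact ⟨(comap_lt_comap_of_surjective hf).mpr hbot, (comap_lt_comap_of_surjective hf).mpr htop⟩
  · rintro ⟨hker, htop⟩
    have hL : comap f (map f L) = L := by rw [comap_map_eq, sup_of_le_left hker.le]
    refine ⟨map f L, ⟨?_, ?_⟩, hL⟩ <;>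
      rw [← comap_lt_comap_of_surjective hf, hL]
    · rwa [MonoidHom.comap_bot]
    · rwa [comap_top]

lemma Subgroup.comap_inf_comap_eq_ker_iff (hf : Function.Surjective f) {K K' : Subgroup Q} :
    comap f K ⊓ comap f K' = f.ker ↔ K ⊓ K' = ⊥ := by
  rw [← comap_inf, ← MonoidHom.comap_bot, (comap_injective hf).eq_iff]

lemma Subgroup.comap_sup_comap_eq_top_iff (hf : Function.Surjective f) {K K' : Subgroup Q} :
    comap f K ⊔ comap f K' = ⊤ ↔ K ⊔ K' = ⊤ := by
  rw [comap_sup_eq f K K' hf, ← comap_top f, (comap_injective hf).eq_iff]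

end Correspondence

theorem stmt_1_general {G : Type*} [Group G] [Fintype G] (H : Subgroup G) [H.Normal] (n : ℕ)
    (hcard : {K : Subgroup G | H < K ∧ K < ⊤}.ncard = n)
    (hMn : ∀ K K' : Subgroup G, K ∈ {K : Subgroup G | H < K ∧ K < ⊤} →
      K' ∈ {K : Subgroup G | H < K ∧ K < ⊤} → K ≠ K' → K ⊓ K' = H ∧ K ⊔ K' = ⊤)
    (hindex : H.index < 2 * n) :
    ∃ m : ℕ, 1 ≤ m ∧ Nonempty ((G ⧸ H) ≃* DihedralGroup m) := by
  set f := QuotientGroup.mk' H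
  have hf : Function.Surjective f := QuotientGroup.mk'_surjective H
  have hker : f.ker = H := QuotientGroup.ker_mk' H
  have himage : comap f '' Set.Ioo ⊥ ⊤ = {K : Subgroup G | H < K ∧ K < ⊤} := by
    rw [comap_image_Ioo_bot_top hf, hker]
    rfl
  have hMnQ : ∀ K ∈ Set.Ioo (⊥ : Subgroup (G ⧸ H)) ⊤, ∀ K' ∈ Set.Ioo ⊥ ⊤, K ≠ K' →
      K ⊓ K' = ⊥ ∧ K ⊔ K' = ⊤ := by
    intro K hK K' hK' hne
    have h := hMn _ _ (himage ▸ ⟨K, hK, rfl⟩) (himage ▸ ⟨K', hK', rfl⟩)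
      ((comap_injective hf).ne hne)
    exact ⟨(comap_inf_comap_eq_ker_iff hf).mp (h.1.trans hker.symm),
      (comap_sup_comap_eq_top_iff hf).mp h.2⟩
  have hlt : Nat.card (G ⧸ H) < 2 * (Set.Ioo (⊥ : Subgroup (G ⧸ H)) ⊤).ncard := by
    rwa [← Set.ncard_image_of_injective _ (comap_injective hf), himage, hcard]
  obtain ⟨K, hK, K', hK', hne, hK2, hK'2⟩ := exists_ne_card_eq_two_of_pairwise_inf_eq_bot
    (fun h => h.1.ne rfl) (fun K hK K' hK' hne => (hMnQ K hK K' hK' hne).1) hlt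
  obtain ⟨s, hs1, hs, rfl⟩ := exists_eq_zpowers_of_card_eq_two hK2
  obtain ⟨t, ht1, ht, rfl⟩ := exists_eq_zpowers_of_card_eq_two hK'2
  obtain ⟨e⟩ := DihedralGroup.nonempty_mulEquiv_of_involutions hs ht hs1 ht1
    (fun h => hne (h ▸ rfl)) (hMnQ _ hK _ hK' hne).2
  exact ⟨orderOf (s * t), orderOf_pos _, ⟨e.symm⟩⟩

/-- If `G` is a finite group, `H < G` a normal subgroup such that the interval `I[H,G]`
in the subgroup lattice is isomorphic to `M_n`, and `[G : H] < 2n`, then `G/H` is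
isomorphic to a dihedral group `D_{2m}` for some `m ≥ 1`. -/
theorem stmt_1 {G : Type*} [Group G] [Fintype G] (H : Subgroup G) [H.Normal] (n : ℕ)
    (hHG : H < ⊤)
    (hcard : {K : Subgroup G | H < K ∧ K < ⊤}.ncard = n)
    (hMn : ∀ K K' : Subgroup G, K ∈ {K : Subgroup G | H < K ∧ K < ⊤} →
      K' ∈ {K : Subgroup G | H < K ∧ K < ⊤} → K ≠ K' → K ⊓ K' = H ∧ K ⊔ K' = ⊤)
    (hindex : H.index < 2 * n) :
    ∃ m : ℕ, 1 ≤ m ∧ Nonempty ((G ⧸ H) ≃* DihedralGroup m) :=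
  stmt_1_general H n hcard hMn hindex
end

section
/- Let p be a prime. Then the subgroup lattice of the dihedral group D_{2p} of order 2p is isomorphic to M_{p+1}: the set S of subgroups K of D_{2p} with ⊥ < K < ⊤ has exactly p + 1 elements, and any two distinct members K, K' of S satisfy K ⊓ K' = ⊥ and K ⊔ K' = ⊤. -/
/-!
A group of order `2p` has, by Lagrange, only subgroups of prime order and prime index strictly
between `⊥` and `⊤`; these are atoms and coatoms of the subgroup lattice at once, so two distinct
ones meet in `⊥` and join to `⊤`. Being an atom, each of them is generated by any of its
nontrivial elements, which leaves the rotation subgroup `⟨r 1⟩` and the `p` reflection subgroups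
`⟨sr i⟩`.
-/

open ArithmeticFunction ArithmeticFunction.Omega in
theorem Nat.prime_of_mul_eq_prime_mul_prime {a b p q : ℕ} (hp : p.Prime) (hq : q.Prime)
    (h : a * b = p * q) (ha : a ≠ 1) (hb : b ≠ 1) : a.Prime := by
  have hpq : p * q ≠ 0 := mul_ne_zero hp.ne_zero hq.ne_zero
  have ha0 : a ≠ 0 := left_ne_zero_of_mul (h ▸ hpq)
  have hb0 : b ≠ 0 := right_ne_zero_of_mul (h ▸ hpq)
  have hΩ : Ω a + Ω b = 2 := by
    rw [← cardFactors_mul ha0 hb0, h, cardFactors_mul hp.ne_zero hq.ne_zero,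
      cardFactors_apply_prime hp, cardFactors_apply_prime hq]
  have hΩa : Ω a ≠ 0 := by
    simp only [ne_eq, cardFactors_eq_zero_iff_eq_zero_or_one, ha0, ha, or_self,
      not_false_eq_true]
  have hΩb : Ω b ≠ 0 := by
    simp only [ne_eq, cardFactors_eq_zero_iff_eq_zero_or_one, hb0, hb, or_self,
      not_false_eq_true]
  exact cardFactors_eq_one_iff_prime.1 (by omega)

namespace Subgroup

variable {G : Type*} [Group G] {H : Subgroup G}

theorem isAtom_of_prime_card (h : (Nat.card H).Prime) : IsAtom H := by
  have : Finite H := Nat.finite_of_card_ne_zero h.ne_zero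
  refine ⟨fun hbot => h.ne_one (card_eq_one.2 hbot), fun K hK => ?_⟩
  rcases (Nat.dvd_prime h).1 (card_dvd_of_le hK.le) with hK1 | hKH
  · exact card_eq_one.1 hK1
  · exact absurd (eq_of_le_of_card_ge hK.le hKH.ge) hK.ne

theorem isCoatom_of_prime_index (h : H.index.Prime) : IsCoatom H := by
  refine ⟨fun htop => h.ne_one (index_eq_one.2 htop), fun K hK => ?_⟩
  rw [← relIndex_mul_index hK.le, Nat.prime_mul_iff] at h
  rcases h with ⟨-, hK1⟩ | ⟨-, hHK⟩
  · exact index_eq_one.1 hK1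
  · exact absurd (relIndex_eq_one.1 hHK) hK.not_ge

theorem lt_top_of_card_lt (h : Nat.card H < Nat.card G) : H < ⊤ :=
  lt_top_iff_ne_top.2 fun hH => h.ne (by rw [hH, card_top])

theorem isAtom_and_isCoatom_of_card_eq_prime_mul_prime {p q : ℕ} (hp : p.Prime) (hq : q.Prime)
    (hG : Nat.card G = p * q) (hbot : ⊥ < H) (htop : H < ⊤) : IsAtom H ∧ IsCoatom H := by
  have hcard : Nat.card H * H.index = p * q := hG ▸ card_mul_index H
  have hH1 : Nat.card H ≠ 1 := fun h => hbot.ne' (card_eq_one.1 h)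
  have hHi : H.index ≠ 1 := fun h => htop.ne (index_eq_one.1 h)
  exact ⟨isAtom_of_prime_card (Nat.prime_of_mul_eq_prime_mul_prime hp hq hcard hH1 hHi),
    isCoatom_of_prime_index
      (Nat.prime_of_mul_eq_prime_mul_prime hp hq ((mul_comm _ _).trans hcard) hHi hH1)⟩

end Subgroup

namespace DihedralGroup

open Subgroup

variable {n : ℕ}

/-- `none` gives the rotation subgroup, `some i` the subgroup `{1, sr i}`. -/
def cyclicSubgroup : Option (ZMod n) → Subgroup (DihedralGroup n)
  | none => zpowers (r 1)
  | some i => zpowers (sr i)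

lemma card_zpowers_r_one : Nat.card (zpowers (r 1 : DihedralGroup n)) = n := by
  rw [Nat.card_zpowers, orderOf_r_one]

lemma card_zpowers_sr (i : ZMod n) : Nat.card (zpowers (sr i)) = 2 := by
  rw [Nat.card_zpowers, orderOf_sr]

lemma mem_zpowers_r_one_iff {x : DihedralGroup n} : x ∈ zpowers (r 1) ↔ ∃ k : ℤ, x = r k := by
  simp only [mem_zpowers_iff, r_one_zpow, eq_comm]

lemma mem_zpowers_sr_iff [NeZero n] {i : ZMod n} {x : DihedralGroup n} :
    x ∈ zpowers (sr i) ↔ x = 1 ∨ x = sr i := by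
  classical
  simp [mem_zpowers_iff_mem_range_orderOf, orderOf_sr, Finset.range_add_one, or_comm]

lemma cyclicSubgroup_injective [NeZero n] : Function.Injective (cyclicSubgroup (n := n)) := by
  rintro (_ | i) (_ | j) h <;> simp only [cyclicSubgroup] at h
  · rfl
  · obtain ⟨k, hk⟩ := mem_zpowers_r_one_iff.1 (h ▸ mem_zpowers (sr j))
    cases hk
  · obtain ⟨k, hk⟩ := mem_zpowers_r_one_iff.1 (h ▸ mem_zpowers (sr i))
    cases hk
  · rcases mem_zpowers_sr_iff.1 (h ▸ mem_zpowers (sr i)) with hi | hi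
    · cases hi
    · cases hi
      rfl

lemma zpowers_r_eq_zpowers_r_one (hn : n.Prime) {a : ZMod n} (ha : a ≠ 0) :
    zpowers (r a) = zpowers (r 1) := by
  have : NeZero n := ⟨hn.ne_zero⟩
  have hle : zpowers (r a) ≤ zpowers (r 1) := zpowers_le.2 ⟨a.val, by simp⟩
  have hatom : IsAtom (zpowers (r 1 : DihedralGroup n)) :=
    isAtom_of_prime_card (by rwa [card_zpowers_r_one])
  exact (hatom.le_iff.1 hle).resolve_left (by simpa [zpowers_eq_bot, ← r_zero] using ha)

theorem setOf_bot_lt_lt_top_eq_range_cyclicSubgroup (hn : n.Prime) :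
    {K : Subgroup (DihedralGroup n) | ⊥ < K ∧ K < ⊤} = Set.range cyclicSubgroup := by
  have : NeZero n := ⟨hn.ne_zero⟩
  ext K
  constructor
  · rintro ⟨hbot, htop⟩
    have hK := (isAtom_and_isCoatom_of_card_eq_prime_mul_prime Nat.prime_two hn nat_card
      hbot htop).1
    obtain ⟨⟨x, hxK⟩, hx1⟩ := ne_bot_iff_exists_ne_one.1 hbot.ne'
    have hx : zpowers x = K := (hK.le_iff.1 (zpowers_le.2 hxK)).resolve_left
      (by simpa [zpowers_eq_bot] using hx1)
    cases x with
    | r a =>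
      have ha : a ≠ 0 := by rintro rfl; exact hx1 (by simp [r_zero])
      exact ⟨none, by rw [← hx, zpowers_r_eq_zpowers_r_one hn ha, cyclicSubgroup]⟩
    | sr i => exact ⟨some i, hx⟩
  · have hmem {H : Subgroup (DihedralGroup n)} (h : (Nat.card H).Prime)
        (hG : Nat.card H < 2 * n) : ⊥ < H ∧ H < ⊤ :=
      ⟨(isAtom_of_prime_card h).bot_lt, lt_top_of_card_lt (nat_card (n := n) ▸ hG)⟩
    rintro ⟨_ | i, rfl⟩
    · exact hmem (card_zpowers_r_one.symm ▸ hn)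
        (by rw [cyclicSubgroup, card_zpowers_r_one]; linarith [hn.pos])
    · exact hmem (card_zpowers_sr i ▸ Nat.prime_two)
        (by rw [cyclicSubgroup, card_zpowers_sr]; linarith [hn.two_le])

end DihedralGroup

open DihedralGroup Subgroup in
/-- For a prime `p`, the subgroup lattice of the dihedral group `D_{2p}` is isomorphic
to `M_{p+1}`: there are exactly `p + 1` subgroups strictly between `⊥` and `⊤`, and any
two distinct such subgroups meet in `⊥` and join to `⊤`. -/
theorem stmt_6 (p : ℕ) (hp : p.Prime) :
    {K : Subgroup (DihedralGroup p) | ⊥ < K ∧ K < ⊤}.ncard = p + 1 ∧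
    ∀ K K' : Subgroup (DihedralGroup p),
      K ∈ {K : Subgroup (DihedralGroup p) | ⊥ < K ∧ K < ⊤} →
      K' ∈ {K : Subgroup (DihedralGroup p) | ⊥ < K ∧ K < ⊤} →
      K ≠ K' → K ⊓ K' = ⊥ ∧ K ⊔ K' = ⊤ := by
  have : NeZero p := ⟨hp.ne_zero⟩
  refine ⟨?_, fun K K' hK hK' hne => ?_⟩
  · rw [setOf_bot_lt_lt_top_eq_range_cyclicSubgroup hp,
      Set.ncard_range_of_injective cyclicSubgroup_injective, Finite.card_option, Nat.card_zmod]
  · obtain ⟨hKa, hKc⟩ :=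
      isAtom_and_isCoatom_of_card_eq_prime_mul_prime Nat.prime_two hp nat_card hK.1 hK.2
    obtain ⟨hK'a, hK'c⟩ :=
      isAtom_and_isCoatom_of_card_eq_prime_mul_prime Nat.prime_two hp nat_card hK'.1 hK'.2
    exact ⟨disjoint_iff.1 (hKa.disjoint_of_ne hK'a hne), hKc.sup_eq_top_of_ne hK'c hne⟩
end

section
/- Let G be a group acting transitively on a set A and let a ∈ A. Then the lattice of congruences of the G-set A (G-invariant equivalence relations on A, ordered as setoids) is order-isomorphic to the interval of subgroups of G between the stabilizer of a and G: there is an order isomorphism between {r : Setoid A | r is G-invariant} and Set.Icc (stabilizer G a) (⊤ : Subgroup G). -/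
/-!
The class of `a` under a `G`-invariant equivalence relation is a block containing `a`, and
conversely, by transitivity, the translates of a block containing `a` partition `A` and so
are the classes of an invariant equivalence relation; the two constructions are mutually
inverse and monotone. Composing with Wielandt's correspondence between blocks containing `a`
and subgroups above `stabilizer G a` (`MulAction.block_stabilizerOrderIso`) gives the theorem.
-/

open Pointwise

namespace MulAction

variable {G X : Type*} [Group G] [MulAction G X]

variable (G X) in
def invariantSetoids : Set (Setoid X) :=
  {r | ∀ (g : G) (x y : X), r x y → r (g • x) (g • y)}

section InvariantSetoid

variable {r : Setoid X}

theorem rel_smul_iff (hr : r ∈ invariantSetoids G X) (g : G) {x y : X} :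
    r (g • x) (g • y) ↔ r x y :=
  ⟨fun h ↦ by simpa using hr g⁻¹ _ _ h, hr g x y⟩

theorem smul_setOf_rel (hr : r ∈ invariantSetoids G X) (g : G) (a : X) :
    g • {x | r x a} = {x | r x (g • a)} := by
  ext x
  rw [Set.mem_smul_set_iff_inv_smul_mem, Set.mem_ofPred_eq, Set.mem_ofPred_eq,
    ← rel_smul_iff hr g, smul_inv_smul]

theorem isBlock_setOf_rel (hr : r ∈ invariantSetoids G X) (a : X) :
    IsBlock G {x | r x a} := by
  rw [isBlock_iff_smul_eq_of_nonempty]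
  rintro g ⟨y, hyg, hya⟩
  rw [smul_setOf_rel hr] at hyg ⊢
  have hga : r (g • a) a := r.trans (r.symm hyg) hya
  ext x
  exact ⟨fun hx ↦ r.trans hx hga, fun hx ↦ r.trans hx (r.symm hga)⟩

end InvariantSetoid

section Block

variable [IsPretransitive G X] {B : Set X}

def IsBlock.setoid (hB : IsBlock G B) (hne : B.Nonempty) : Setoid X where
  r x y := ∃ g : G, x ∈ g • B ∧ y ∈ g • B
  iseqv := by
    refine ⟨fun x ↦ ?_, fun ⟨g, hx, hy⟩ ↦ ⟨g, hy, hx⟩, ?_⟩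
    · obtain ⟨b, hb⟩ := hne
      obtain ⟨g, rfl⟩ := exists_smul_eq G b x
      exact ⟨g, Set.smul_mem_smul_set hb, Set.smul_mem_smul_set hb⟩
    · rintro x y z ⟨g, hx, hy⟩ ⟨h, hy', hz⟩
      exact ⟨h, hB.smul_eq_smul_of_nonempty ⟨y, hy, hy'⟩ ▸ hx, hz⟩

theorem IsBlock.setoid_mem_invariantSetoids (hB : IsBlock G B) (hne : B.Nonempty) :
    hB.setoid hne ∈ invariantSetoids G X := by
  rintro h x y ⟨g, hx, hy⟩
  refine ⟨h * g, ?_, ?_⟩ <;> rw [mul_smul] <;> exact Set.smul_mem_smul_set ‹_›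

theorem IsBlock.setOf_setoid_rel (hB : IsBlock G B) {a : X} (ha : a ∈ B) :
    {x | hB.setoid ⟨a, ha⟩ x a} = B := by
  ext x
  refine ⟨fun ⟨g, hx, hag⟩ ↦ ?_, fun hx ↦ ⟨1, by simpa using hx, by simpa using ha⟩⟩
  rwa [hB.smul_eq_smul_of_nonempty (g₂ := 1) ⟨a, hag, by simpa using ha⟩, one_smul] at hx

theorem setoid_isBlock_setOf_rel {r : Setoid X} (hr : r ∈ invariantSetoids G X) (a : X) :
    (isBlock_setOf_rel hr a).setoid ⟨a, r.refl a⟩ = r := by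
  ext x y
  change (∃ g : G, x ∈ g • {x | r x a} ∧ y ∈ g • {x | r x a}) ↔ r x y
  simp only [smul_setOf_rel hr, Set.mem_ofPred_eq]
  refine ⟨fun ⟨g, hx, hy⟩ ↦ r.trans hx (r.symm hy), fun hxy ↦ ?_⟩
  obtain ⟨g, rfl⟩ := exists_smul_eq G a y
  exact ⟨g, hxy, r.refl _⟩

theorem setOf_rel_subset_iff {r r' : Setoid X} (hr : r ∈ invariantSetoids G X)
    (hr' : r' ∈ invariantSetoids G X) (a : X) :
    {x | r x a} ⊆ {x | r' x a} ↔ r ≤ r' := by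
  refine ⟨fun hsub x y hxy ↦ ?_, fun hle x hx ↦ hle hx⟩
  obtain ⟨g, rfl⟩ := exists_smul_eq G a y
  have hx : x ∈ g • {x | r x a} := by rwa [smul_setOf_rel hr]
  simpa [smul_setOf_rel hr'] using Set.smul_set_mono hsub hx

variable (G) in
def invariantSetoidsOrderIsoBlockMem (a : X) : invariantSetoids G X ≃o BlockMem G a where
  toFun r := ⟨{x | r.1 x a}, r.1.refl a, isBlock_setOf_rel r.2 a⟩
  invFun B := ⟨B.2.2.setoid ⟨a, B.2.1⟩, B.2.2.setoid_mem_invariantSetoids _⟩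
  left_inv r := Subtype.ext (setoid_isBlock_setOf_rel r.2 a)
  right_inv B := Subtype.ext (B.2.2.setOf_setoid_rel B.2.1)
  map_rel_iff' {r r'} := setOf_rel_subset_iff r.2 r'.2 a

end Block

end MulAction

open MulAction in
/-- For a transitive action of a group `G` on a set `A` and a point `a ∈ A`, the lattice
of congruences of the `G`-set `A` (the `G`-invariant equivalence relations on `A`,
ordered as setoids) is order-isomorphic to the interval of subgroups of `G` between the
stabilizer of `a` and `G`. -/
theorem stmt_7 {G A : Type*} [Group G] [MulAction G A] [MulAction.IsPretransitive G A]
    (a : A) :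
    Nonempty
      (({r : Setoid A | ∀ (g : G) (x y : A), r x y → r (g • x) (g • y)} :
          Set (Setoid A)) ≃o
        (Set.Icc (MulAction.stabilizer G a) (⊤ : Subgroup G))) :=
  ⟨(invariantSetoidsOrderIsoBlockMem G a).trans <|
    (block_stabilizerOrderIso G a).trans (OrderIso.setCongr _ _ Set.Icc_top.symm)⟩
end

section
/- Let p be a prime and consider the dihedral group D_{2p} of order 2p acting on itself by left multiplication (the regular action). Then the congruence lattice of this D_{2p}-set is isomorphic to M_{p+1}: the set of congruences r with ⊥ < r < ⊤ has exactly p + 1 elements, and any two distinct such congruences r, r' satisfy r ⊓ r' = ⊥ and r ⊔ r' = ⊤ in the setoid lattice. -/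
/-!
The congruences of the regular action of a group `G` are exactly the left coset relations
`x⁻¹ * y ∈ H` of its subgroups `H`, and `H ↦ leftRel H` is an order embedding; so the
intermediate congruences correspond to the intermediate subgroups. Since `|D_{2p}| = 2p` has
two prime factors, Lagrange's theorem forbids a chain `⊥ < H < K < ⊤`, which forces distinct
intermediate elements to meet in `⊥` and join to `⊤`, and also shows that an intermediate
subgroup is the rotation subgroup unless it contains a reflection `sr i`, in which case it is
`{1, sr i}`. This gives `1 + p` of them.
-/

open QuotientGroup
open scoped ArithmeticFunction.Omega

theorem inf_eq_bot_and_sup_eq_top_of_isAntichain {α : Type*} [Lattice α] [BoundedOrder α]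
    {P : α → Prop} (hinf : ∀ a b, P a → P b → P (a ⊓ b)) (hsup : ∀ a b, P a → P b → P (a ⊔ b))
    (hP : IsAntichain (· ≤ ·) {a | P a ∧ ⊥ < a ∧ a < ⊤}) {a b : α}
    (ha : a ∈ {a | P a ∧ ⊥ < a ∧ a < ⊤}) (hb : b ∈ {a | P a ∧ ⊥ < a ∧ a < ⊤}) (hab : a ≠ b) :
    a ⊓ b = ⊥ ∧ a ⊔ b = ⊤ := by
  constructor
  · by_contra h
    have hmem : a ⊓ b ∈ {a | P a ∧ ⊥ < a ∧ a < ⊤} :=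
      ⟨hinf a b ha.1 hb.1, bot_lt_iff_ne_bot.2 h, inf_le_left.trans_lt ha.2.2⟩
    exact hab ((hP.eq hmem ha inf_le_left).symm.trans (hP.eq hmem hb inf_le_right))
  · by_contra h
    have hmem : a ⊔ b ∈ {a | P a ∧ ⊥ < a ∧ a < ⊤} :=
      ⟨hsup a b ha.1 hb.1, ha.2.1.trans_le le_sup_left, lt_top_iff_ne_top.2 h⟩
    exact hab ((hP.eq ha hmem le_sup_left).trans (hP.eq hb hmem le_sup_right).symm)

theorem ArithmeticFunction.cardFactors_lt_cardFactors_of_dvd {a b : ℕ} (hab : a ∣ b) (hb : b ≠ 0)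
    (hne : a ≠ b) : Ω a < Ω b := by
  obtain ⟨c, rfl⟩ := hab
  have hc1 : c ≠ 1 := by
    rintro rfl
    exact hne (mul_one a).symm
  rw [cardFactors_mul (left_ne_zero_of_mul hb) (right_ne_zero_of_mul hb), lt_add_iff_pos_right,
    cardFactors_pos_iff_one_lt]
  exact Nat.one_lt_iff_ne_zero_and_ne_one.2 ⟨right_ne_zero_of_mul hb, hc1⟩

theorem Subgroup.isAntichain_setOf_bot_lt_lt_top_of_isSemiprime {G : Type*} [Group G]
    (hG : (Nat.card G).IsSemiprime) : IsAntichain (· ≤ ·) {H : Subgroup G | ⊥ < H ∧ H < ⊤} := by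
  have : Finite G := Nat.finite_of_card_ne_zero hG.1
  rintro H ⟨hH, -⟩ K ⟨-, hK⟩ hne hle
  have hH_pos : 0 < Ω (Nat.card H) :=
    ArithmeticFunction.cardFactors_pos_iff_one_lt.2 ((H.one_lt_card_iff_ne_bot).2 hH.ne')
  have hHK : Ω (Nat.card H) < Ω (Nat.card K) :=
    ArithmeticFunction.cardFactors_lt_cardFactors_of_dvd (card_dvd_of_le hle) Nat.card_pos.ne'
      fun h => hne (eq_of_le_of_card_ge hle h.ge)
  have hKG : Ω (Nat.card K) < Ω (Nat.card G) :=
    ArithmeticFunction.cardFactors_lt_cardFactors_of_dvd K.card_subgroup_dvd_card hG.1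
      fun h => hK.ne ((card_eq_iff_eq_top K).1 h)
  have := hG.2
  omega

namespace Setoid

variable {G : Type*}

def IsLeftInvariant [Mul G] (r : Setoid G) : Prop :=
  ∀ g x y : G, r x y → r (g * x) (g * y)

section Mul

variable [Mul G] {r s : Setoid G}

theorem IsLeftInvariant.inf (hr : r.IsLeftInvariant) (hs : s.IsLeftInvariant) :
    (r ⊓ s).IsLeftInvariant :=
  fun g x y h => ⟨hr g x y h.1, hs g x y h.2⟩

theorem IsLeftInvariant.sup (hr : r.IsLeftInvariant) (hs : s.IsLeftInvariant) :
    (r ⊔ s).IsLeftInvariant := by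
  intro g
  suffices r ⊔ s ≤ (r ⊔ s).comap (g * ·) from fun x y h => this h
  exact sup_le (fun x y h => Setoid.le_def.1 le_sup_left (hr g x y h))
    (fun x y h => Setoid.le_def.1 le_sup_right (hs g x y h))

end Mul

variable [Group G] {r : Setoid G}

def IsLeftInvariant.subgroup (hr : r.IsLeftInvariant) : Subgroup G where
  carrier := {x | r 1 x}
  one_mem' := r.refl 1
  mul_mem' {a b} ha hb := r.trans ha (by simpa using hr a 1 b hb)
  inv_mem' {a} ha := r.symm (by simpa using hr a⁻¹ 1 a ha)

theorem IsLeftInvariant.mem_subgroup (hr : r.IsLeftInvariant) {x : G} :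
    x ∈ hr.subgroup ↔ r 1 x :=
  Iff.rfl

theorem IsLeftInvariant.leftRel_subgroup (hr : r.IsLeftInvariant) : leftRel hr.subgroup = r := by
  ext x y
  rw [leftRel_apply, hr.mem_subgroup]
  exact ⟨fun h => by simpa using hr x _ _ h, fun h => by simpa using hr x⁻¹ _ _ h⟩

end Setoid

namespace QuotientGroup

variable {G : Type*} [Group G]

theorem leftRel_isLeftInvariant (H : Subgroup G) : (leftRel H).IsLeftInvariant := by
  intro g x y h
  rw [leftRel_apply] at h ⊢
  rwa [mul_inv_rev, mul_assoc, inv_mul_cancel_left]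

theorem leftRel_le_leftRel {H K : Subgroup G} : leftRel H ≤ leftRel K ↔ H ≤ K := by
  refine ⟨fun h x hx => ?_, fun h x y hxy => ?_⟩
  · simpa [leftRel_apply] using @h 1 x (by simpa [leftRel_apply])
  · rw [leftRel_apply] at hxy ⊢
    exact h hxy

def leftRelEmbedding : Subgroup G ↪o Setoid G :=
  OrderEmbedding.ofMapLEIff leftRel fun _ _ => leftRel_le_leftRel

theorem leftRel_bot : leftRel (⊥ : Subgroup G) = ⊥ := by
  ext x y
  rw [leftRel_apply, Subgroup.mem_bot, inv_mul_eq_one]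
  rfl

theorem leftRel_lt_leftRel {H K : Subgroup G} : leftRel H < leftRel K ↔ H < K :=
  leftRelEmbedding.lt_iff_lt

theorem image_leftRel_setOf_bot_lt_lt_top :
    leftRel '' {H : Subgroup G | ⊥ < H ∧ H < ⊤} = {r | r.IsLeftInvariant ∧ ⊥ < r ∧ r < ⊤} := by
  ext r
  constructor
  · rintro ⟨H, ⟨hbot, htop⟩, rfl⟩
    rw [← leftRel_lt_leftRel, leftRel_bot] at hbot
    rw [← leftRel_lt_leftRel, leftRel_eq_top.2 rfl] at htop
    exact ⟨leftRel_isLeftInvariant H, hbot, htop⟩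
  · rintro ⟨hr, hbot, htop⟩
    rw [← hr.leftRel_subgroup] at hbot htop
    rw [← leftRel_bot, leftRel_lt_leftRel] at hbot
    rw [← leftRel_eq_top.2 rfl, leftRel_lt_leftRel] at htop
    exact ⟨hr.subgroup, ⟨hbot, htop⟩, hr.leftRel_subgroup⟩

end QuotientGroup

namespace DihedralGroup

variable {n : ℕ}

def rotations : Subgroup (DihedralGroup n) where
  carrier := Set.range r
  one_mem' := ⟨0, rfl⟩
  mul_mem' := by
    rintro _ _ ⟨i, rfl⟩ ⟨j, rfl⟩
    exact ⟨i + j, rfl⟩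
  inv_mem' := by
    rintro _ ⟨i, rfl⟩
    exact ⟨-i, rfl⟩

def reflectionSubgroup (i : ZMod n) : Subgroup (DihedralGroup n) where
  carrier := {1, sr i}
  one_mem' := Or.inl rfl
  mul_mem' := by
    rintro _ _ (rfl | rfl) (rfl | rfl) <;> simp
  inv_mem' := by
    rintro _ (rfl | rfl) <;> simp [inv_sr]

@[simp]
theorem r_mem_rotations (i : ZMod n) : r i ∈ rotations := ⟨i, rfl⟩

@[simp]
theorem sr_notMem_rotations (i : ZMod n) : sr i ∉ rotations := by
  rintro ⟨j, hj⟩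
  cases hj

theorem mem_reflectionSubgroup {i : ZMod n} {x : DihedralGroup n} :
    x ∈ reflectionSubgroup i ↔ x = 1 ∨ x = sr i :=
  Iff.rfl

theorem r_one_ne_one [Nontrivial (ZMod n)] : (r 1 : DihedralGroup n) ≠ 1 := by
  rw [one_def, Ne, r.injEq]
  exact one_ne_zero

theorem sr_ne_one (i : ZMod n) : sr i ≠ 1 := by
  rw [one_def]
  nofun

theorem rotations_mem_setOf_bot_lt_lt_top [Nontrivial (ZMod n)] :
    rotations ∈ {H : Subgroup (DihedralGroup n) | ⊥ < H ∧ H < ⊤} := by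
  refine ⟨bot_lt_iff_ne_bot.2 fun h => r_one_ne_one (n := n) ?_, lt_top_iff_ne_top.2 fun h => ?_⟩
  · simpa [h] using r_mem_rotations (n := n) 1
  · simpa [h] using sr_notMem_rotations (0 : ZMod n)

theorem reflectionSubgroup_mem_setOf_bot_lt_lt_top [Nontrivial (ZMod n)] (i : ZMod n) :
    reflectionSubgroup i ∈ {H : Subgroup (DihedralGroup n) | ⊥ < H ∧ H < ⊤} := by
  refine ⟨bot_lt_iff_ne_bot.2 fun h => ?_, lt_top_iff_ne_top.2 fun h => ?_⟩
  · have : sr i ∈ reflectionSubgroup i := Or.inr rfl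
    exact sr_ne_one i (by simpa [h] using this)
  · have : r 1 ∈ reflectionSubgroup i := h ▸ Subgroup.mem_top _
    simp [mem_reflectionSubgroup, r_one_ne_one, -r_zero] at this

theorem reflectionSubgroup_injective : Function.Injective (reflectionSubgroup (n := n)) := by
  intro i j h
  have : sr i ∈ reflectionSubgroup j := h ▸ Or.inr rfl
  simpa [mem_reflectionSubgroup, sr_ne_one] using this

theorem rotations_notMem_range_reflectionSubgroup :
    rotations ∉ Set.range (reflectionSubgroup (n := n)) := by
  rintro ⟨i, hi⟩
  exact sr_notMem_rotations i (hi ▸ Or.inr rfl)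

theorem isAntichain_setOf_bot_lt_lt_top {p : ℕ} (hp : p.Prime) :
    IsAntichain (· ≤ ·) {H : Subgroup (DihedralGroup p) | ⊥ < H ∧ H < ⊤} :=
  Subgroup.isAntichain_setOf_bot_lt_lt_top_of_isSemiprime <| by
    rw [nat_card]
    exact Nat.prime_two.mul_isAlmostPrime_two hp

theorem setOf_bot_lt_lt_top_eq {p : ℕ} (hp : p.Prime) :
    {H : Subgroup (DihedralGroup p) | ⊥ < H ∧ H < ⊤} =
      insert rotations (Set.range reflectionSubgroup) := by
  have := Fact.mk hp
  have hanti := isAntichain_setOf_bot_lt_lt_top hp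
  refine Set.Subset.antisymm (fun H hH => ?_) (Set.insert_subset rotations_mem_setOf_bot_lt_lt_top
    (Set.range_subset_iff.2 reflectionSubgroup_mem_setOf_bot_lt_lt_top))
  by_cases hrefl : ∃ i, sr i ∈ H
  · obtain ⟨i, hi⟩ := hrefl
    refine Or.inr ⟨i, hanti.eq (reflectionSubgroup_mem_setOf_bot_lt_lt_top i) hH ?_⟩
    rintro _ (rfl | rfl)
    exacts [H.one_mem, hi]
  · refine Or.inl (hanti.eq hH rotations_mem_setOf_bot_lt_lt_top ?_)
    rintro (i | i) hx
    · exact r_mem_rotations i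
    · exact absurd ⟨i, hx⟩ hrefl

theorem ncard_setOf_bot_lt_lt_top {p : ℕ} (hp : p.Prime) :
    {H : Subgroup (DihedralGroup p) | ⊥ < H ∧ H < ⊤}.ncard = p + 1 := by
  have := Fact.mk hp
  rw [setOf_bot_lt_lt_top_eq hp, Set.ncard_insert_of_notMem
    rotations_notMem_range_reflectionSubgroup (Set.finite_range _),
    Set.ncard_range_of_injective reflectionSubgroup_injective, Nat.card_zmod]

end DihedralGroup

/-- For a prime `p`, the congruence lattice of the dihedral group `D_{2p}` acting on
itself by left multiplication is isomorphic to `M_{p+1}`: the set of congruences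
strictly between `⊥` and `⊤` has exactly `p + 1` elements, and any two distinct such
congruences meet in `⊥` and join to `⊤` among setoids. -/
theorem stmt_9 (p : ℕ) (hp : p.Prime) :
    {r : Setoid (DihedralGroup p) |
        (∀ g x y : DihedralGroup p, r x y → r (g * x) (g * y)) ∧
        ⊥ < r ∧ r < ⊤}.ncard = p + 1 ∧
    ∀ r r' : Setoid (DihedralGroup p),
      r ∈ {r : Setoid (DihedralGroup p) |
        (∀ g x y : DihedralGroup p, r x y → r (g * x) (g * y)) ∧
        ⊥ < r ∧ r < ⊤} →
      r' ∈ {r : Setoid (DihedralGroup p) |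
        (∀ g x y : DihedralGroup p, r x y → r (g * x) (g * y)) ∧
        ⊥ < r ∧ r < ⊤} →
      r ≠ r' → r ⊓ r' = ⊥ ∧ r ⊔ r' = ⊤ := by
  have hcongr := image_leftRel_setOf_bot_lt_lt_top (G := DihedralGroup p)
  have hanti :=
    (DihedralGroup.isAntichain_setOf_bot_lt_lt_top hp).image_embedding leftRelEmbedding
  refine ⟨?_, fun r r' hr hr' hne => inf_eq_bot_and_sup_eq_top_of_isAntichain
    (P := Setoid.IsLeftInvariant) (fun _ _ => .inf) (fun _ _ => .sup) (hcongr ▸ hanti) hr hr' hne⟩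
  rw [← DihedralGroup.ncard_setOf_bot_lt_lt_top hp,
    ← Set.ncard_image_of_injective _ leftRelEmbedding.injective]
  exact congrArg Set.ncard hcongr.symm
end
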